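/- arXiv:2604.12696 — 7 statements merged into one kernel-verified Lean document; each statement's English description precedes it below -/
import Mathlib

section
/- Let b ≥ 1, n ≥ 2, and let c : {1, …, n} → ℕ satisfy c(i) < 2^b for all i and c(i) ≠ c(i+1) for all 1 ≤ i < n. For each i with 1 ≤ i ≤ n−1, let k(i) be the least bit position (0-indexed) at which the binary representations of c(i) and c(i+1) differ, and define c'(i) = 2·k(i) + bit_{k(i)}(c(i)), where bit_k(x) denotes the k-th binary digit of x. Then c'(i) < 2b for all 1 ≤ i ≤ n−1, and c'(i) ≠ c'(i+1) for all 1 ≤ i ≤ n−2. -/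
/-!
Colors are at most `2 ^ b`, so two of them can only differ below bit `b`; hence `k i < b` and
`c' i = 2 * k i + bit < 2 * b`. The color `2 * k + β` encodes the pair `(k, β)` injectively, so
`c' i = c' (i + 1)` would force `k i = k (i + 1)` and `bit_{k i} (c i) = bit_{k i} (c (i + 1))`,
contradicting the choice of `k i` as a position where `c i` and `c (i + 1)` differ.
-/

namespace Nat

theorem lt_of_testBit_ne_of_lt_two_pow {x y b k : ℕ} (hx : x < 2 ^ b) (hy : y < 2 ^ b)
    (hne : x.testBit k ≠ y.testBit k) : k < b := by
  by_contra! hbk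
  have hpow : 2 ^ b ≤ 2 ^ k := Nat.pow_le_pow_right two_pos hbk
  exact hne <| (testBit_lt_two_pow (hx.trans_le hpow)).trans
    (testBit_lt_two_pow (hy.trans_le hpow)).symm

theorem two_mul_add_toNat_lt {k b : ℕ} (β : Bool) (hk : k < b) : 2 * k + β.toNat < 2 * b := by
  have := β.toNat_le
  omega

theorem two_mul_add_toNat_inj {k l : ℕ} {β γ : Bool} :
    2 * k + β.toNat = 2 * l + γ.toNat ↔ k = l ∧ β = γ := by
  cases β <;> cases γ <;> simp <;> omega

end Nat

theorem color_reduction_general (b n : ℕ) (c : ℕ → ℕ)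
    (hbound : ∀ i, 1 ≤ i → i ≤ n → c i < 2 ^ b)
    (k : ℕ → ℕ)
    (hk : ∀ i, 1 ≤ i → i < n →
      (Nat.testBit (c i) (k i) ≠ Nat.testBit (c (i + 1)) (k i)) ∧
      (∀ t < k i, Nat.testBit (c i) t = Nat.testBit (c (i + 1)) t))
    (c' : ℕ → ℕ)
    (hc' : ∀ i, 1 ≤ i → i < n →
      c' i = 2 * k i + (Nat.testBit (c i) (k i)).toNat) :
    (∀ i, 1 ≤ i → i < n → c' i < 2 * b) ∧
    (∀ i, 1 ≤ i → i + 1 < n → c' i ≠ c' (i + 1)) := by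
  refine ⟨fun i h1 hi => ?_, fun i h1 hi => ?_⟩
  · rw [hc' i h1 hi]
    exact Nat.two_mul_add_toNat_lt _ <| Nat.lt_of_testBit_ne_of_lt_two_pow
      (hbound i h1 hi.le) (hbound (i + 1) (by omega) hi) (hk i h1 hi).1
  · rw [hc' i h1 (by omega), hc' (i + 1) (by omega) hi, Ne, Nat.two_mul_add_toNat_inj]
    rintro ⟨hkk, hbit⟩
    exact (hk i h1 (by omega)).1 (hkk ▸ hbit)

/-- **One round of deterministic coin flipping / color reduction.**
`c : ℕ → ℕ` is a coloring of the 1-indexed vertices `1,…,n` of a path with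
colors `< 2^b` in which adjacent colors differ.  For `1 ≤ i ≤ n−1`, `k i` is
the least bit position at which `c i` and `c (i+1)` differ, and
`c' i = 2 * k i + bit_{k i}(c i)`.  Then `c'` is a proper coloring of the
path on `1,…,n−1` with colors `< 2b`. -/
theorem color_reduction (b n : ℕ) (hb : 1 ≤ b) (hn : 2 ≤ n) (c : ℕ → ℕ)
    (hbound : ∀ i, 1 ≤ i → i ≤ n → c i < 2 ^ b)
    (hproper : ∀ i, 1 ≤ i → i < n → c i ≠ c (i + 1))
    (k : ℕ → ℕ)
    (hk : ∀ i, 1 ≤ i → i < n →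
      (Nat.testBit (c i) (k i) ≠ Nat.testBit (c (i + 1)) (k i)) ∧
      (∀ t < k i, Nat.testBit (c i) t = Nat.testBit (c (i + 1)) t))
    (c' : ℕ → ℕ)
    (hc' : ∀ i, 1 ≤ i → i < n →
      c' i = 2 * k i + (Nat.testBit (c i) (k i)).toNat) :
    (∀ i, 1 ≤ i → i < n → c' i < 2 * b) ∧
    (∀ i, 1 ≤ i → i + 1 < n → c' i ≠ c' (i + 1)) :=
  color_reduction_general b n c hbound k hk c' hc'
end

section
/- Let S be a string, let τ ≥ 1, and let i, j, m be positive integers with m ≥ τ, i + m − 1 ≤ |S| and j + m − 1 ≤ |S|. Suppose A ⊆ [i, i + m − τ] is a set of positions such that: (covering) for every position p ∈ [i, i + m − 1] there exists a ∈ A with a ≤ p ≤ a + τ − 1; and (matching occurrences) for every a ∈ A, S[a, a + τ − 1] = S[a + (j − i), a + (j − i) + τ − 1]. Then S[i, i + m − 1] = S[j, j + m − 1]. -/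
theorem apply_eq_of_forall_lt_apply_add_eq {α : Type*} {S : ℕ → α} {a b τ p : ℕ}
    (h : ∀ t < τ, S (a + t) = S (b + t)) (hap : a ≤ p) (hpa : p < a + τ) :
    S p = S (b + (p - a)) := by
  simpa [Nat.add_sub_cancel' hap] using h (p - a) (by omega)

theorem substring_eq_of_covering_general {Alph : Type*} (S : ℕ → Alph) (τ i j m : ℕ)
    (hτ : 1 ≤ τ)
    (A : Set ℕ) (hA : A ⊆ Set.Icc i (i + m - τ))
    (hcover : ∀ p, i ≤ p → p ≤ i + m - 1 → ∃ a ∈ A, a ≤ p ∧ p ≤ a + τ - 1)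
    (hmatch : ∀ a ∈ A, ∀ t < τ, S (a + t) = S (j + (a - i) + t)) :
    ∀ t < m, S (i + t) = S (j + t) := by
  intro t ht
  obtain ⟨a, haA, hap, hpa⟩ := hcover (i + t) (by omega) (by omega)
  have hia : i ≤ a := (hA haA).1
  rw [apply_eq_of_forall_lt_apply_add_eq (hmatch a haA) hap (by omega)]
  congr 1
  omega

/-- **Substring equality from a covering by matching occurrences.**
The string is modeled as `S : ℕ → Alph` on 1-indexed positions with length `n`.
`A ⊆ [i, i+m−τ]` is a set of positions such that every position of
`S[i, i+m−1]` is covered by some length-`τ` occurrence starting in `A`, and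
each such occurrence matches the corresponding occurrence shifted to the
`j`-side (the occurrence starting at position `j + (a − i)`).
Then `S[i, i+m−1] = S[j, j+m−1]`. -/
theorem substring_eq_of_covering {Alph : Type*} (S : ℕ → Alph) (n τ i j m : ℕ)
    (hτ : 1 ≤ τ) (hi : 1 ≤ i) (hj : 1 ≤ j) (hm : τ ≤ m)
    (hin : i + m - 1 ≤ n) (hjn : j + m - 1 ≤ n)
    (A : Set ℕ) (hA : A ⊆ Set.Icc i (i + m - τ))
    (hcover : ∀ p, i ≤ p → p ≤ i + m - 1 → ∃ a ∈ A, a ≤ p ∧ p ≤ a + τ - 1)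
    (hmatch : ∀ a ∈ A, ∀ t < τ, S (a + t) = S (j + (a - i) + t)) :
    ∀ t < m, S (i + t) = S (j + t) :=
  substring_eq_of_covering_general S τ i j m hτ A hA hcover hmatch
end

section
/- Let P and S be strings of equal length m, let 1 ≤ i < j ≤ m be matches, and suppose there is no match k with i < k < j. Then: (a) j − i is the length of the shortest period of P[1, j], i.e., P[1,j] has period j − i and has no period of length p with 1 ≤ p < j − i; (b) for every k with j ≤ 2k and k ≤ j, k is a match if and only if k = j − (j − i)·x for some natural number x. -/
/-!
Comparing the two alignments of `P[1, j]` against the suffix of `S`, a match `k ≤ j` is the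
same as a period `j - k` of `P[1, j]`. Hence the match `i` gives the period `j - i`, and a
shorter period `p` would give a match `j - p` strictly between `i` and `j`. For (b), a match
`k ≥ j / 2` gives a period `q = j - k ≤ j / 2`; if `q > 0` then `q ≥ j - i` by minimality, so
`q + (j - i) ≤ j` and by the weak Fine–Wilf theorem `gcd (j - i) q` is a period as well, which
minimality forces to be `j - i`. Conversely every multiple of a period is a period.
-/

namespace ConsecutiveMatches

variable {α : Type*}

/-- `p` is a period of the 1-indexed word `w[1, n]`. -/
def IsPeriod (w : ℕ → α) (n p : ℕ) : Prop :=
  ∀ s, 1 ≤ s → s + p ≤ n → w s = w (s + p)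

def IsMatch (P S : ℕ → α) (m k : ℕ) : Prop :=
  ∀ t < k, P (1 + t) = S (m - k + 1 + t)

section Periods

variable {w : ℕ → α} {n p q : ℕ}

theorem isPeriod_zero : IsPeriod w n 0 := fun _ _ _ => rfl

theorem IsPeriod.add (hp : IsPeriod w n p) (hq : IsPeriod w n q) : IsPeriod w n (p + q) :=
  fun s hs hsn => by
    rw [hp s hs (by omega), hq (s + p) (by omega) (by omega), Nat.add_assoc]

theorem IsPeriod.mul (hp : IsPeriod w n p) (x : ℕ) : IsPeriod w n (p * x) := by
  induction x with
  | zero => exact isPeriod_zero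
  | succ x ih => exact ih.add hp

theorem IsPeriod.sub (hp : IsPeriod w n p) (hq : IsPeriod w n q) (hpq : p ≤ q)
    (hn : p + q ≤ n) : IsPeriod w n (q - p) := by
  intro s hs hsn
  by_cases hsq : s + q ≤ n
  · have hback := hp (s + (q - p)) (by omega) (by omega)
    rw [hq s hs hsq, hback, show s + (q - p) + p = s + q by omega]
  · -- here `s > n - q ≥ p`, so we may step back by `p` first
    have hback := hp (s - p) (by omega) (by omega)
    have hfwd := hq (s - p) (by omega) (by omega)
    rw [show s - p + p = s by omega] at hback
    rw [← hback, hfwd, show s - p + q = s + (q - p) by omega]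

/-- The weak Fine–Wilf theorem. -/
theorem IsPeriod.gcd (hp : IsPeriod w n p) (hq : IsPeriod w n q) (hn : p + q ≤ n) :
    IsPeriod w n (p.gcd q) := by
  obtain ⟨s, hs⟩ : ∃ s, p + q = s := ⟨_, rfl⟩
  induction s using Nat.strong_induction_on generalizing p q with
  | _ s ih =>
    rcases Nat.eq_zero_or_pos p with rfl | hp0
    · simpa using hq
    rcases Nat.eq_zero_or_pos q with rfl | hq0
    · simpa using hp
    rcases le_total p q with hle | hle
    · rw [← Nat.gcd_sub_self_right hle]
      exact ih _ (by omega) hp (hp.sub hq hle hn) (by omega) rfl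
    · rw [← Nat.gcd_sub_self_left hle]
      exact ih _ (by omega) (hq.sub hp hle (by omega)) hq (by omega) rfl

theorem IsPeriod.dvd_of_forall_lt_not_isPeriod {d : ℕ} (hd : IsPeriod w n d) (hd0 : 0 < d)
    (hmin : ∀ p, 0 < p → p < d → ¬ IsPeriod w n p) (hq : IsPeriod w n q) (hqn : 2 * q ≤ n) :
    d ∣ q := by
  rcases Nat.eq_zero_or_pos q with rfl | hq0
  · exact dvd_zero d
  have hdq : d ≤ q := not_lt.1 fun hlt => hmin q hq0 hlt hq
  have hgcd : IsPeriod w n (d.gcd q) := hd.gcd hq (by omega)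
  have hgcd_le : d.gcd q ≤ d := Nat.le_of_dvd hd0 (Nat.gcd_dvd_left d q)
  have hgcd_eq : d.gcd q = d :=
    le_antisymm hgcd_le (not_lt.1 fun hlt => hmin _ (Nat.gcd_pos_of_pos_left q hd0) hlt hgcd)
  exact hgcd_eq ▸ Nat.gcd_dvd_right d q

end Periods

theorem isMatch_iff_isPeriod {P S : ℕ → α} {m j k : ℕ} (hj : IsMatch P S m j) (hkj : k ≤ j)
    (hjm : j ≤ m) : IsMatch P S m k ↔ IsPeriod P j (j - k) := by
  have hshift : ∀ t < k, S (m - k + 1 + t) = P (1 + t + (j - k)) := fun t ht => by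
    have h := hj (t + (j - k)) (by omega)
    rw [show 1 + (t + (j - k)) = 1 + t + (j - k) by omega,
      show m - j + 1 + (t + (j - k)) = m - k + 1 + t by omega] at h
    exact h.symm
  constructor
  · intro hk s hs hsj
    have h := hshift (s - 1) (by omega)
    rw [← hk (s - 1) (by omega), show 1 + (s - 1) = s by omega] at h
    exact h
  · intro hper t ht
    rw [hshift t ht]
    exact hper (1 + t) (by omega) (by omega)

end ConsecutiveMatches

open ConsecutiveMatches in
theorem consecutive_matches_progression_general {Alph : Type*} (P S : ℕ → Alph)
    (m i j : ℕ) (hij : i < j) (hjm : j ≤ m)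
    (hmatchi : ∀ t < i, P (1 + t) = S (m - i + 1 + t))
    (hmatchj : ∀ t < j, P (1 + t) = S (m - j + 1 + t))
    (hnone : ∀ k, i < k → k < j → ¬ (∀ t < k, P (1 + t) = S (m - k + 1 + t))) :
    -- (a) `j − i` is a period of `P[1,j]` …
    ((∀ t, 1 ≤ t → t ≤ i → P t = P (t + (j - i))) ∧
      -- … and no shorter period exists
      (∀ p, 1 ≤ p → p < j - i →
        ¬ (∀ t, 1 ≤ t → t + p ≤ j → P t = P (t + p)))) ∧
    -- (b)
    (∀ k, j ≤ 2 * k → k ≤ j →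
      ((∀ t < k, P (1 + t) = S (m - k + 1 + t)) ↔
        ∃ x : ℕ, k = j - (j - i) * x)) := by
  have hmatch_iff (k : ℕ) (hkj : k ≤ j) : IsMatch P S m k ↔ IsPeriod P j (j - k) :=
    isMatch_iff_isPeriod hmatchj hkj hjm
  have hper : IsPeriod P j (j - i) := (hmatch_iff i hij.le).1 hmatchi
  have hmin : ∀ p, 0 < p → p < j - i → ¬ IsPeriod P j p := fun p hp hpd hpp =>
    hnone (j - p) (by omega) (by omega)
      ((hmatch_iff (j - p) (by omega)).2 (by rwa [Nat.sub_sub_self (by omega)]))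
  refine ⟨⟨fun t ht hti => hper t ht (by omega), hmin⟩, fun k hk hkj => (hmatch_iff k hkj).trans ?_⟩
  constructor
  · intro hk
    obtain ⟨x, hx⟩ := hper.dvd_of_forall_lt_not_isPeriod (by omega) hmin hk (by omega)
    exact ⟨x, by omega⟩
  · rintro ⟨x, rfl⟩
    have hle : (j - i) * x ≤ j := by omega
    rw [Nat.sub_sub_self hle]
    exact hper.mul x

/-- **Consecutive matches give the shortest period and an arithmetic
progression of matches.**
`P` and `S` are strings of length `m`, modeled as functions `ℕ → Alph` on
1-indexed positions.  An integer `k ∈ [0,m]` is a *match* if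
`P[1,k] = S[m−k+1, m]`, i.e. `∀ t < k, P (1+t) = S (m−k+1+t)`.
Let `1 ≤ i < j ≤ m` be matches with no match strictly between them.  Then
(a) `j − i` is the length of the shortest period of `P[1,j]`, and
(b) for every `k` with `j ≤ 2k` and `k ≤ j`, `k` is a match iff
`k = j − (j−i)·x` for some natural number `x`. -/
theorem consecutive_matches_progression {Alph : Type*} (P S : ℕ → Alph)
    (m i j : ℕ) (hi1 : 1 ≤ i) (hij : i < j) (hjm : j ≤ m)
    (hmatchi : ∀ t < i, P (1 + t) = S (m - i + 1 + t))
    (hmatchj : ∀ t < j, P (1 + t) = S (m - j + 1 + t))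
    (hnone : ∀ k, i < k → k < j → ¬ (∀ t < k, P (1 + t) = S (m - k + 1 + t))) :
    -- (a) `j − i` is a period of `P[1,j]` …
    ((∀ t, 1 ≤ t → t ≤ i → P t = P (t + (j - i))) ∧
      -- … and no shorter period exists
      (∀ p, 1 ≤ p → p < j - i →
        ¬ (∀ t, 1 ≤ t → t + p ≤ j → P t = P (t + p)))) ∧
    -- (b)
    (∀ k, j ≤ 2 * k → k ≤ j →
      ((∀ t < k, P (1 + t) = S (m - k + 1 + t)) ↔
        ∃ x : ℕ, k = j - (j - i) * x)) :=
  consecutive_matches_progression_general P S m i j hij hjm hmatchi hmatchj hnone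
end

section
/- Let P and S be strings of equal length m, and let i ≥ 1. Then the set M_i = { k ∈ [2^{i−1}, 2^i − 1] : k is a match } is a finite arithmetic progression: there exist natural numbers a, d, t such that M_i = { a − d·x : 0 ≤ x < t }. -/
/-!
Let `a` be the largest match in the segment `[L, 2L)`, `L = 2^(i-1)`. For `c ≤ a`, `a - c` is a
match iff `c` is a period of `P[1,a]`, so the matches in the segment are the `a - c` with `c` a
period of `P[1,a]` and `c ≤ a - L`. Two such periods `p, q` satisfy `p + q ≤ 2(a - L) ≤ a`, so by
the weak Fine–Wilf lemma `gcd p q` is again a period; hence these periods are exactly the multiples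
of the least positive one among them.
-/

namespace Stringology

variable {α : Type*} (P S : ℕ → α)

/-- `P[1,k] = S[m-k+1,m]` for strings `P`, `S` of length `m`. -/
def IsMatch (m k : ℕ) : Prop :=
  k ≤ m ∧ ∀ u < k, P (1 + u) = S (m - k + 1 + u)

/-- `p` is a period of the prefix `P[1,n]`. -/
def IsPeriod (n p : ℕ) : Prop :=
  ∀ u, u + p < n → P (1 + u) = P (1 + u + p)

variable {P S}

namespace IsPeriod

variable {n : ℕ}

theorem zero : IsPeriod P n 0 := fun _ _ => rfl

theorem mul {d : ℕ} (hd : IsPeriod P n d) (j : ℕ) : IsPeriod P n (d * j) := by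
  induction j with
  | zero => exact zero
  | succ j ih =>
    intro u hu
    rw [Nat.mul_succ] at hu
    calc P (1 + u) = P (1 + (u + d)) := by rw [← Nat.add_assoc]; exact hd u (by omega)
      _ = P (1 + (u + d) + d * j) := ih (u + d) (by omega)
      _ = P (1 + u + d * (j + 1)) := by rw [Nat.mul_succ]; congr 1; omega

theorem sub {p q : ℕ} (hp : IsPeriod P n p) (hq : IsPeriod P n q) (hpq : p ≤ q)
    (hn : p + q ≤ n) : IsPeriod P n (q - p) := by
  intro u hu
  rcases lt_or_ge (u + q) n with h | h
  · have h2 := hp (u + q - p) (by omega)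
    rw [show 1 + (u + q - p) + p = 1 + u + q by omega] at h2
    rw [hq u h, show 1 + u + (q - p) = 1 + (u + q - p) by omega, h2]
  · have h1 := hp (u - p) (by omega)
    have h2 := hq (u - p) (by omega)
    rw [show 1 + (u - p) + p = 1 + u by omega] at h1
    rw [show 1 + (u - p) + q = 1 + u + (q - p) by omega] at h2
    rw [← h1, h2]

/-- The weak Fine–Wilf periodicity lemma. -/
theorem gcd {p q : ℕ} (hp : IsPeriod P n p) (hq : IsPeriod P n q) (hn : p + q ≤ n) :
    IsPeriod P n (Nat.gcd p q) := by
  rcases Nat.eq_zero_or_pos p with rfl | hp0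
  · simpa using hq
  rcases Nat.eq_zero_or_pos q with rfl | hq0
  · simpa using hp
  rcases le_total p q with hpq | hqp
  · rw [← Nat.gcd_sub_self_right hpq]
    exact gcd hp (hp.sub hq hpq hn) (by omega)
  · rw [← Nat.gcd_sub_self_left hqp]
    exact gcd (hq.sub hp hqp (by omega)) hq (by omega)
termination_by p + q

end IsPeriod

theorem exists_isPeriod_iff_dvd (n N : ℕ) (hN : 2 * N ≤ n) :
    ∃ d, ∀ c ≤ N, IsPeriod P n c ↔ d ∣ c := by
  classical
  by_cases hex : ∃ c, 0 < c ∧ c ≤ N ∧ IsPeriod P n c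
  · set d := Nat.find hex
    obtain ⟨hd0, hdN, hd⟩ : 0 < d ∧ d ≤ N ∧ IsPeriod P n d := Nat.find_spec hex
    refine ⟨d, fun c hcN => ⟨fun hc => ?_, fun ⟨j, hj⟩ => hj ▸ hd.mul j⟩⟩
    rcases Nat.eq_zero_or_pos c with rfl | hc0
    · exact dvd_zero d
    have hgd : Nat.gcd c d ≤ d := Nat.le_of_dvd hd0 (Nat.gcd_dvd_right c d)
    have hdg : d ≤ Nat.gcd c d :=
      Nat.find_min' hex ⟨Nat.gcd_pos_of_pos_left d hc0, by omega, hc.gcd hd (by omega)⟩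
    exact Nat.gcd_eq_right_iff_dvd.mp (le_antisymm hgd hdg)
  · push Not at hex
    refine ⟨0, fun c hcN => ⟨fun hc => ?_, fun hc => ?_⟩⟩
    · rcases Nat.eq_zero_or_pos c with rfl | hc0
      · exact dvd_refl 0
      · exact absurd hc (hex c hc0 hcN)
    · rw [Nat.eq_zero_of_zero_dvd hc]
      exact IsPeriod.zero

theorem isMatch_sub_iff_isPeriod {m a c : ℕ} (ha : IsMatch P S m a) (hc : c ≤ a) :
    IsMatch P S m (a - c) ↔ IsPeriod P a c := by
  obtain ⟨ham, ha⟩ := ha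
  have hshift : ∀ u, u + c < a → P (1 + u + c) = S (m - (a - c) + 1 + u) := fun u hu => by
    rw [Nat.add_assoc, ha (u + c) hu]
    congr 1
    omega
  constructor
  · rintro ⟨-, hk⟩ u hu
    rw [hk u (by omega), hshift u hu]
  · intro hper
    exact ⟨by omega, fun u hu => (hper u (by omega)).trans (hshift u (by omega))⟩

theorem exists_lt_div_add_one_eq_mul_iff {N d c : ℕ} :
    (∃ x < N / d + 1, c = d * x) ↔ c ≤ N ∧ d ∣ c := by
  constructor
  · rintro ⟨x, hx, rfl⟩
    refine ⟨?_, dvd_mul_right d x⟩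
    rcases Nat.eq_zero_or_pos d with rfl | hd0
    · simp
    · rw [Nat.mul_comm]
      exact (Nat.le_div_iff_mul_le hd0).mp (Nat.lt_succ_iff.mp hx)
  · rintro ⟨hcN, hdc⟩
    exact ⟨c / d, Nat.lt_succ_of_le (Nat.div_le_div_right hcN), (Nat.mul_div_cancel' hdc).symm⟩

theorem exists_matches_between_eq_progression {m a L : ℕ} (ha : IsMatch P S m a)
    (hLa : L ≤ a) (haL : a ≤ 2 * L) :
    ∃ d, ∀ k, (L ≤ k ∧ k ≤ a ∧ IsMatch P S m k) ↔ ∃ x < (a - L) / d + 1, k = a - d * x := by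
  obtain ⟨d, hd⟩ := exists_isPeriod_iff_dvd (P := P) a (a - L) (by omega)
  refine ⟨d, fun k => ⟨?_, ?_⟩⟩
  · rintro ⟨hLk, hka, hk⟩
    have hper : IsPeriod P a (a - k) := by
      rwa [← isMatch_sub_iff_isPeriod ha (Nat.sub_le a k), Nat.sub_sub_self hka]
    obtain ⟨x, hx, hcx⟩ := (exists_lt_div_add_one_eq_mul_iff (N := a - L) (d := d)).mpr
      ⟨by omega, (hd _ (by omega)).mp hper⟩
    exact ⟨x, hx, by omega⟩
  · rintro ⟨x, hx, rfl⟩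
    obtain ⟨hcN, hdc⟩ := (exists_lt_div_add_one_eq_mul_iff (c := d * x)).mp ⟨x, hx, rfl⟩
    exact ⟨by omega, Nat.sub_le _ _,
      (isMatch_sub_iff_isPeriod ha (by omega)).mpr ((hd _ hcN).mpr hdc)⟩

end Stringology

open Stringology in
theorem matches_in_segment_are_progression_general {Alph : Type*} (P S : ℕ → Alph)
    (m i : ℕ) :
    ∃ a d t : ℕ, ∀ k : ℕ,
      (2 ^ (i - 1) ≤ k ∧ k ≤ 2 ^ i - 1 ∧ k ≤ m ∧
        (∀ u < k, P (1 + u) = S (m - k + 1 + u)))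
      ↔ (∃ x : ℕ, x < t ∧ k = a - d * x) := by
  classical
  set a := Nat.findGreatest (IsMatch P S m) (2 ^ i - 1)
  have hsegment : ∀ k, (2 ^ (i - 1) ≤ k ∧ k ≤ 2 ^ i - 1 ∧ IsMatch P S m k) ↔
      (2 ^ (i - 1) ≤ k ∧ k ≤ a ∧ IsMatch P S m k) := fun k =>
    and_congr_right fun _ => ⟨fun ⟨hk, hm⟩ => ⟨Nat.le_findGreatest hk hm, hm⟩,
      fun ⟨hk, hm⟩ => ⟨hk.trans (Nat.findGreatest_le _), hm⟩⟩
  by_cases hLa : 2 ^ (i - 1) ≤ a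
  · have ha : IsMatch P S m a :=
      Nat.findGreatest_of_ne_zero rfl (Nat.pos_iff_ne_zero.mp (Nat.one_le_two_pow.trans hLa))
    have hpow : 2 ^ i ≤ 2 * 2 ^ (i - 1) := by rcases i with _ | i <;> simp [pow_succ, mul_comm]
    have haL : a ≤ 2 * 2 ^ (i - 1) := (Nat.findGreatest_le _).trans (by omega)
    obtain ⟨d, hd⟩ := exists_matches_between_eq_progression ha hLa haL
    exact ⟨a, d, _, fun k => (hsegment k).trans (hd k)⟩
  · refine ⟨0, 0, 0, fun k => ⟨fun hk => ?_, fun ⟨x, hx, _⟩ => absurd hx (Nat.not_lt_zero x)⟩⟩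
    have := (hsegment k).mp hk
    omega

/-- **Matches within a dyadic segment form an arithmetic progression.**
`P` and `S` are strings of length `m`, modeled as functions `ℕ → Alph` on
1-indexed positions.  An integer `k ∈ [0,m]` is a *match* if
`P[1,k] = S[m−k+1, m]`, i.e. `∀ u < k, P (1+u) = S (m−k+1+u)`.
For every `i ≥ 1`, the set of matches in the segment `[2^{i−1}, 2^i − 1]`
equals `{ a − d·x : 0 ≤ x < t }` for some naturals `a`, `d`, `t`. -/
theorem matches_in_segment_are_progression {Alph : Type*} (P S : ℕ → Alph)
    (m i : ℕ) (hi : 1 ≤ i) :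
    ∃ a d t : ℕ, ∀ k : ℕ,
      (2 ^ (i - 1) ≤ k ∧ k ≤ 2 ^ i - 1 ∧ k ≤ m ∧
        (∀ u < k, P (1 + u) = S (m - k + 1 + u)))
      ↔ (∃ x : ℕ, x < t ∧ k = a - d * x) :=
  matches_in_segment_are_progression_general P S m i
end

section
/- Let P and S be strings of equal length m, and let a ∈ [1, m] be a match, i.e., P[1,a] = S[m−a+1, m]. Let 1 ≤ l_p ≤ r_p ≤ m and 1 ≤ l_s ≤ r_s ≤ m with r_p − l_p = r_s − l_s, and set m' = r_p − l_p + 1, P' = P[l_p, r_p], S' = S[l_s, r_s], and a' = a − l_p − m + r_s + 1. If 1 ≤ a' ≤ m', then a' is a match for the pair (P', S'), i.e., P'[1, a'] = S'[m' − a' + 1, m']. -/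
/-! Both matches say that `P` read from some position agrees with `S` read from a position
`m - a` further on. The window `P'[1, a'] = P[lp, lp + a' - 1]` lies inside `P[1, a]`
(because `rs ≤ m`), and the offset `m - a` carries it exactly onto the last `a'` letters of `S'`. -/

/-- `P[i, i + n - 1] = S[j, j + n - 1]`. -/
def WindowsAgree {α : Type*} (P S : ℕ → α) (i j n : ℕ) : Prop :=
  ∀ t < n, P (i + t) = S (j + t)

theorem WindowsAgree.shift {α : Type*} {P S : ℕ → α} {i j n : ℕ} (h : WindowsAgree P S i j n)
    {d k : ℕ} (hdk : d + k ≤ n) : WindowsAgree P S (i + d) (j + d) k := by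
  intro t ht
  simpa only [Nat.add_assoc] using h (d + t) (by omega)

theorem match_restricts_to_substrings_general {Alph : Type*} (P S : ℕ → Alph)
    (m a : ℕ) (ham : a ≤ m)
    (hmatch : ∀ t < a, P (1 + t) = S (m - a + 1 + t))
    (lp rp ls rs : ℕ)
    (hlp : 1 ≤ lp)
    (hslr : ls ≤ rs) (hrs : rs ≤ m)
    (hlen : rp - lp = rs - ls)
    (m' a' : ℕ)
    (hm' : m' = rp - lp + 1)
    (ha' : a' = a + rs + 1 - (lp + m))
    (ha'1 : 1 ≤ a') :
    ∀ t < a', P (lp + t) = S (ls + m' - a' + t) := by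
  have hwindow : WindowsAgree P S (1 + (lp - 1)) (m - a + 1 + (lp - 1)) a' :=
    WindowsAgree.shift (n := a) hmatch (by omega)
  have hP : 1 + (lp - 1) = lp := by omega
  have hS : m - a + 1 + (lp - 1) = ls + m' - a' := by omega
  rwa [hP, hS] at hwindow

/-- **A match restricts to substrings.**
`P` and `S` are strings of length `m`, modeled as functions `ℕ → Alph` on
1-indexed positions; `a ∈ [1,m]` is a match, i.e. `P[1,a] = S[m−a+1,m]`.
For substrings `P' = P[lp, rp]` and `S' = S[ls, rs]` of equal length
`m' = rp − lp + 1`, set `a' = a − lp − m + rs + 1` (as a truncated natural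
number subtraction `a + rs + 1 - (lp + m)`).  If `1 ≤ a' ≤ m'` then `a'` is a
match for `(P', S')`, i.e. `P'[1,a'] = S'[m'−a'+1, m']`, which unfolds to
`P (lp + t) = S (ls + m' − a' + t)` for all `t < a'`. -/
theorem match_restricts_to_substrings {Alph : Type*} (P S : ℕ → Alph)
    (m a : ℕ) (ha1 : 1 ≤ a) (ham : a ≤ m)
    (hmatch : ∀ t < a, P (1 + t) = S (m - a + 1 + t))
    (lp rp ls rs : ℕ)
    (hlp : 1 ≤ lp) (hplr : lp ≤ rp) (hrp : rp ≤ m)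
    (hls : 1 ≤ ls) (hslr : ls ≤ rs) (hrs : rs ≤ m)
    (hlen : rp - lp = rs - ls)
    (m' a' : ℕ)
    (hm' : m' = rp - lp + 1)
    (ha' : a' = a + rs + 1 - (lp + m))
    (ha'1 : 1 ≤ a') (ha'm : a' ≤ m') :
    ∀ t < a', P (lp + t) = S (ls + m' - a' + t) :=
  match_restricts_to_substrings_general P S m a ham hmatch lp rp ls rs hlp hslr hrs hlen m' a' hm'
    ha' ha'1
end

section
/- Let S be a string, let ℓ ≥ 1 and i ≥ 2 be integers, and for each t let B_{ℓ,t} denote the block S[ℓ(t−1)+1, ℓt]. Suppose S[x, x+2h−1] is a square (i.e., S[x+k] = S[x+h+k] for all 0 ≤ k < h) with x + 2h − 1 ≤ |S|, half-length h satisfying 2ℓ ≤ h < 3ℓ, and starting position x satisfying ℓ(i−2)+2 ≤ x ≤ ℓ(i−1)+1. Then: (a) the block B_{ℓ,i} lies entirely inside the left half of the square, i.e., x ≤ ℓ(i−1)+1 and ℓ·i ≤ x + h − 1; (b) S[ℓ(i−1)+1+h, ℓi+h] = B_{ℓ,i}; (c) this copy lies inside the blocks B_{ℓ,i+2} and B_{ℓ,i+3},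 i.e., ℓ(i+1)+1 ≤ ℓ(i−1)+1+h and ℓi + h ≤ ℓ(i+3). -/
theorem square_apply_add_half {α : Type*} {S : ℕ → α} {x h p : ℕ}
    (hsq : ∀ k < h, S (x + k) = S (x + h + k)) (hxp : x ≤ p) (hp : p < x + h) :
    S (p + h) = S p := by
  obtain ⟨k, rfl⟩ := Nat.exists_eq_add_of_le hxp
  rw [add_right_comm]
  exact (hsq k (by omega)).symm

theorem square_contains_block_copy_general {Alph : Type*} (S : ℕ → Alph)
    (ℓ i x h : ℕ) (hi : 2 ≤ i)
    (hsq : ∀ k < h, S (x + k) = S (x + h + k))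
    (hh1 : 2 * ℓ ≤ h) (hh2 : h < 3 * ℓ)
    (hx1 : ℓ * (i - 2) + 2 ≤ x) (hx2 : x ≤ ℓ * (i - 1) + 1) :
    -- (a)
    (x ≤ ℓ * (i - 1) + 1 ∧ ℓ * i ≤ x + h - 1) ∧
    -- (b)
    (∀ t < ℓ, S (ℓ * (i - 1) + 1 + h + t) = S (ℓ * (i - 1) + 1 + t)) ∧
    -- (c)
    (ℓ * (i + 1) + 1 ≤ ℓ * (i - 1) + 1 + h ∧ ℓ * i + h ≤ ℓ * (i + 3)) := by
  -- Writing `i = j + 2` removes the truncated subtractions, leaving `ℓ * j` as a linear atom for `omega`.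
  obtain ⟨j, rfl⟩ := Nat.exists_eq_add_of_le' hi
  simp only [Nat.add_sub_cancel, show j + 2 - 1 = j + 1 by omega, mul_add] at *
  refine ⟨⟨hx2, by omega⟩, fun t ht => ?_, by omega⟩
  rw [add_right_comm]
  exact square_apply_add_half hsq (by omega) (by omega)

/-- **A square of the given range contains a shifted copy of the block `B_{ℓ,i}`.**
`S` is a string of length `n`, modeled as a function `ℕ → Alph` on 1-indexed
positions.  For `t ≥ 1`, the block `B_{ℓ,t}` is `S[ℓ(t−1)+1, ℓt]`.
Suppose `S[x, x+2h−1]` is a square (`S (x+k) = S (x+h+k)` for all `k < h`)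
with `2ℓ ≤ h < 3ℓ` and `ℓ(i−2)+2 ≤ x ≤ ℓ(i−1)+1` (where `i ≥ 2`).  Then
(a) the block `B_{ℓ,i}` lies inside the left half of the square,
(b) `S[ℓ(i−1)+1+h, ℓi+h] = B_{ℓ,i}`, and
(c) this copy lies inside the blocks `B_{ℓ,i+2}` and `B_{ℓ,i+3}`. -/
theorem square_contains_block_copy {Alph : Type*} (S : ℕ → Alph)
    (n ℓ i x h : ℕ) (hℓ : 1 ≤ ℓ) (hi : 2 ≤ i)
    (hsq : ∀ k < h, S (x + k) = S (x + h + k))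
    (hn : x + 2 * h - 1 ≤ n)
    (hh1 : 2 * ℓ ≤ h) (hh2 : h < 3 * ℓ)
    (hx1 : ℓ * (i - 2) + 2 ≤ x) (hx2 : x ≤ ℓ * (i - 1) + 1) :
    -- (a)
    (x ≤ ℓ * (i - 1) + 1 ∧ ℓ * i ≤ x + h - 1) ∧
    -- (b)
    (∀ t < ℓ, S (ℓ * (i - 1) + 1 + h + t) = S (ℓ * (i - 1) + 1 + t)) ∧
    -- (c)
    (ℓ * (i + 1) + 1 ≤ ℓ * (i - 1) + 1 + h ∧ ℓ * i + h ≤ ℓ * (i + 3)) :=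
  square_contains_block_copy_general S ℓ i x h hi hsq hh1 hh2 hx1 hx2
end

section
/- For all strings u, v over the two-letter alphabet {⟨, ⟩}: l(u ∘ v) = l(u) + max(l(v) − r(u), 0) and r(u ∘ v) = r(v) + max(r(u) − l(v), 0). -/
/- Strings over the parenthesis alphabet `{⟨, ⟩}` are modeled as `List Bool`,
with `true` standing for the opening parenthesis `⟨` and `false` for the
closing parenthesis `⟩`. -/

/-- `lval S` is the number of unmatched closing parentheses of `S`:
the maximum over all prefixes `p` of `S` of `max(#⟩(p) − #⟨(p), 0)`
(truncated natural subtraction realizes the inner `max(·,0)`). -/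
def lval (S : List Bool) : ℕ :=
  (S.inits.map fun p => p.count false - p.count true).foldr max 0

/-- `rval S` is the number of unmatched opening parentheses of `S`:
the maximum over all suffixes `s` of `S` of `max(#⟨(s) − #⟩(s), 0)`. -/
def rval (S : List Bool) : ℕ :=
  (S.tails.map fun s => s.count true - s.count false).foldr max 0

def cntZ (p : List Bool) : ℤ := (p.count false : ℤ) - p.count true

def LZ (S : List Bool) : ℤ := (S.inits.map cntZ).foldr max 0
def RZ (S : List Bool) : ℤ :=
  (S.tails.map fun s => (s.count true : ℤ) - s.count false).foldr max 0

lemma foldr_max_toNat (l : List ℤ) :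
    (l.map Int.toNat).foldr max 0 = (l.foldr max 0).toNat := by
  induction l with
  | nil => simp
  | cons a t ih => simp only [List.map_cons, List.foldr_cons, ih]; omega

lemma mem_le_foldr_max {a : ℤ} {l : List ℤ} (b : ℤ) (h : a ∈ l) :
    a ≤ l.foldr max b := by
  induction l with
  | nil => simp at h
  | cons x t ih =>
    rcases List.mem_cons.1 h with h | h
    · simp [h, le_max_iff]
    · simp [le_max_iff, ih h]

lemma base_le_foldr_max (b : ℤ) (l : List ℤ) : b ≤ l.foldr max b := by
  induction l with
  | nil => simp
  | cons x t ih => simp [le_max_iff]; omega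

lemma foldr_max_base {b b' : ℤ} (l : List ℤ) (h : b' ≤ b) :
    l.foldr max b = max (l.foldr max b') b := by
  induction l with
  | nil => simp; omega
  | cons x t ih => simp [List.foldr_cons, ih]

lemma foldr_max_map_add (l : List ℤ) (b c : ℤ) :
    (l.map (· + c)).foldr max (b + c) = l.foldr max b + c := by
  induction l with
  | nil => simp
  | cons x t ih => simp [List.foldr_cons, ih]

lemma lval_eq (S : List Bool) : (lval S : ℤ) = LZ S := by
  have h : (S.inits.map fun p => p.count false - p.count true)
      = (S.inits.map cntZ).map Int.toNat := by
    rw [List.map_map]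
    refine List.map_congr_left fun p _ => ?_
    simp [cntZ, Function.comp]
  have h0 : (0:ℤ) ≤ LZ S := by
    have := base_le_foldr_max 0 (S.inits.map cntZ); exact this
  rw [LZ] at h0
  rw [lval, h, foldr_max_toNat, LZ]
  omega

lemma rval_eq (S : List Bool) : (rval S : ℤ) = RZ S := by
  have h : (S.tails.map fun s => s.count true - s.count false)
      = (S.tails.map fun s => (s.count true : ℤ) - s.count false).map Int.toNat := by
    rw [List.map_map]
    refine List.map_congr_left fun p _ => ?_
    simp [Function.comp]
  have h0 : (0:ℤ) ≤ RZ S :=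
    base_le_foldr_max 0 _
  rw [RZ] at h0
  rw [rval, h, foldr_max_toNat, RZ]
  omega

def eZ (a : Bool) : ℤ := if a then -1 else 1

lemma cntZ_cons (a : Bool) (p : List Bool) : cntZ (a :: p) = cntZ p + eZ a := by
  cases a <;> simp [cntZ, eZ, List.count_cons] <;> push_cast <;> ring

lemma zero_mem_map_cntZ (S : List Bool) : (0:ℤ) ∈ S.inits.map cntZ := by
  refine List.mem_map.2 ⟨[], ?_, by simp [cntZ]⟩
  simp [List.mem_inits]

lemma LZ_nonneg (S : List Bool) : 0 ≤ LZ S := base_le_foldr_max 0 _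

lemma LZ_cons (a : Bool) (S : List Bool) : LZ (a :: S) = max 0 (LZ S + eZ a) := by
  have hmap : (a :: S).inits.map cntZ
      = 0 :: (S.inits.map cntZ).map (· + eZ a) := by
    rw [List.inits_cons, List.map_cons, List.map_map, List.map_map]
    have h0 : cntZ [] = 0 := by simp [cntZ]
    rw [h0]
    congr 1
    apply List.map_congr_left
    intro p _
    show cntZ (a :: p) = cntZ p + eZ a
    exact cntZ_cons a p
  have hb : ((-1:ℤ)) + eZ a ≤ 0 := by cases a <;> simp [eZ]
  have h1 : ((S.inits.map cntZ).map (· + eZ a)).foldr max 0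
      = max (((S.inits.map cntZ).map (· + eZ a)).foldr max (-1 + eZ a)) 0 :=
    foldr_max_base _ hb
  have h2 := foldr_max_map_add (S.inits.map cntZ) (-1) (eZ a)
  have h3 : (S.inits.map cntZ).foldr max (-1) = LZ S := by
    have := foldr_max_base (b := 0) (b' := -1) (S.inits.map cntZ) (by norm_num)
    have h4 : (0:ℤ) ≤ (S.inits.map cntZ).foldr max (-1) :=
      mem_le_foldr_max _ (zero_mem_map_cntZ S)
    rw [LZ]; omega
  rw [LZ, hmap, List.foldr_cons, h1, h2, h3]
  omega

lemma cntZ_le_LZ (S : List Bool) : cntZ S ≤ LZ S := by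
  refine mem_le_foldr_max _ ?_
  exact List.mem_map.2 ⟨S, by simp [List.mem_inits], rfl⟩

lemma RZ_cons (a : Bool) (S : List Bool) :
    RZ (a :: S) = max (-cntZ S - eZ a) (RZ S) := by
  rw [RZ, List.tails_cons, List.map_cons, List.foldr_cons]
  have : ((List.count true (a :: S) : ℤ) - List.count false (a :: S)) = -cntZ S - eZ a := by
    cases a <;> simp [cntZ, eZ, List.count_cons] <;> push_cast <;> ring
  rw [this]; rfl

lemma RZ_eq (S : List Bool) : RZ S = LZ S - cntZ S := by
  induction S with
  | nil => simp [RZ, LZ, cntZ]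
  | cons a t ih =>
    rw [RZ_cons, LZ_cons, cntZ_cons, ih]
    omega

lemma cntZ_append (u v : List Bool) : cntZ (u ++ v) = cntZ u + cntZ v := by
  simp [cntZ, List.count_append]; push_cast; ring

lemma LZ_append (u v : List Bool) : LZ (u ++ v) = max (LZ u) (cntZ u + LZ v) := by
  induction u with
  | nil => simp [LZ, cntZ]; have := LZ_nonneg v; rw [LZ] at this; omega
  | cons a t ih =>
    rw [List.cons_append, LZ_cons, LZ_cons, ih, cntZ_cons]
    omega

/-- **Unmatched parentheses of a concatenation.**
`l(u ∘ v) = l(u) + max(l(v) − r(u), 0)` and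
`r(u ∘ v) = r(v) + max(r(u) − l(v), 0)`
(truncated natural subtraction realizes `max(·,0)`). -/
theorem unmatched_concat (u v : List Bool) :
    lval (u ++ v) = lval u + (lval v - rval u) ∧
    rval (u ++ v) = rval v + (rval u - lval v) := by
  have h1 := lval_eq (u ++ v)
  have h2 := lval_eq u
  have h3 := lval_eq v
  have h4 := rval_eq u
  have h5 := rval_eq v
  have h6 := rval_eq (u ++ v)
  rw [RZ_eq] at h4 h5 h6
  rw [LZ_append] at h1 h6
  rw [cntZ_append] at h6
  have hcu := cntZ_le_LZ u
  have hcv := cntZ_le_LZ v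
  have hu := LZ_nonneg u
  have hv := LZ_nonneg v
  constructor <;> omega
end
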